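/- arXiv:2304.14047 — 4 statements merged into one kernel-verified Lean document; each statement's English description precedes it below -/
import Mathlib

section
/- Let E : ℝ^N → ℝ be convex and differentiable, and let F(σ) := E(σ²) where σ² denotes the componentwise square map (σ₁², …, σ_N²). If σ̂ is a local minimizer of F on ℝ^N, then σ̂² is a global minimizer of E on the nonnegative cone ℝ₊^N. -/
/-!
Near `σ`, every `ν ≥ 0` close to `σ²` is the square of a point close to `σ` (take square roots
with the signs of `σ`), so `σ²` is a local minimizer of `E` on the nonnegative cone. The cone is
convex, and a local minimizer of a convex function on a convex set is a global one.
-/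

open Set Filter Topology

variable {ι : Type*}

noncomputable def sqrtLift (σ ν : ι → ℝ) : ι → ℝ :=
  fun i => (if σ i < 0 then -1 else 1) * √(ν i)

theorem sqrtLift_sq_self (σ : ι → ℝ) : sqrtLift σ (fun i => σ i ^ 2) = σ := by
  funext i
  rw [sqrtLift, Real.sqrt_sq_eq_abs]
  split_ifs with h
  · simp [abs_of_neg h]
  · simp [abs_of_nonneg (not_lt.1 h)]

theorem sq_sqrtLift (σ : ι → ℝ) {ν : ι → ℝ} (hν : 0 ≤ ν) :
    (fun i => sqrtLift σ ν i ^ 2) = ν := by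
  funext i
  rw [sqrtLift, mul_pow, Real.sq_sqrt (hν i)]
  split_ifs <;> norm_num

theorem continuous_sqrtLift (σ : ι → ℝ) : Continuous (sqrtLift σ) :=
  continuous_pi fun _ => by unfold sqrtLift; fun_prop

theorem IsLocalMin.isLocalMinOn_Ici_sq {f : (ι → ℝ) → ℝ} {σ : ι → ℝ}
    (hmin : IsLocalMin (fun σ => f (fun i => σ i ^ 2)) σ) :
    IsLocalMinOn f (Ici 0) (fun i => σ i ^ 2) := by
  have hlift : Tendsto (sqrtLift σ) (𝓝 fun i => σ i ^ 2) (𝓝 σ) := by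
    have := (continuous_sqrtLift σ).tendsto (fun i => σ i ^ 2)
    rwa [sqrtLift_sq_self] at this
  filter_upwards [nhdsWithin_le_nhds (hlift.eventually hmin), self_mem_nhdsWithin]
    with ν hν hν_nonneg
  rwa [sq_sqrtLift σ hν_nonneg] at hν

theorem stmt_1_general {N : ℕ} (E : (Fin N → ℝ) → ℝ)
    (hconv : ConvexOn ℝ Set.univ E)
    (F : (Fin N → ℝ) → ℝ) (hF : F = fun σ => E (fun i => σ i ^ 2))
    (σ : Fin N → ℝ) (hmin : IsLocalMin F σ) :
    ∀ ν : Fin N → ℝ, (∀ i, 0 ≤ ν i) → E (fun i => σ i ^ 2) ≤ E ν := by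
  subst hF
  intro ν hν
  have hσ_sq : (0 : Fin N → ℝ) ≤ fun i => σ i ^ 2 := fun i => sq_nonneg (σ i)
  exact IsMinOn.of_isLocalMinOn_of_convexOn hσ_sq hmin.isLocalMinOn_Ici_sq
    (hconv.subset (subset_univ _) (convex_Ici 0)) hν

/-- A local minimizer of `F σ = E (σ²)` (componentwise square) gives, via squaring,
a global minimizer of the convex function `E` over the nonnegative cone. -/
theorem stmt_1 {N : ℕ} (E : (Fin N → ℝ) → ℝ)
    (hconv : ConvexOn ℝ Set.univ E) (hdiff : Differentiable ℝ E)
    (F : (Fin N → ℝ) → ℝ) (hF : F = fun σ => E (fun i => σ i ^ 2))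
    (σ : Fin N → ℝ) (hmin : IsLocalMin F σ) :
    ∀ ν : Fin N → ℝ, (∀ i, 0 ≤ ν i) → E (fun i => σ i ^ 2) ≤ E ν :=
  stmt_1_general E hconv F hF σ hmin
end

section
/- Let E : ℝ^N → ℝ be convex with symmetric positive semidefinite Hessian H at a point μ* ∈ ℝ₊^N, where μ* is a minimizer of E over ℝ₊^N. Suppose (μ* + ker H) ∩ ℝ₊^N = {μ*}. Then there exists λ > 0 such that (ν − μ*)ᵀ H (ν − μ*) ≥ λ ‖ν − μ*‖² for all ν ∈ ℝ₊^N. -/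
/-!
The hypothesis `(μ + ker H) ∩ ℝ₊ᴺ = {μ}` says that no nonzero direction of the tangent cone
`{w | μ i = 0 → 0 ≤ w i}` of `ℝ₊ᴺ` at `μ` lies in `ker H`: a small positive multiple of such a
direction would stay in the orthant. Since `H` is positive semidefinite, `wᵀ H w = 0` forces
`H w = 0`, so the quadratic form is positive on the nonzero directions of this closed cone.
By compactness it attains a positive minimum on the unit sphere of the cone, and homogeneity
spreads this bound to the whole cone, which contains every `ν - μ` with `ν ≥ 0`.
-/

open Matrix Filter Topology

theorem exists_pos_mul_norm_sq_le_of_isClosed_cone {E : Type*} [NormedAddCommGroup E]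
    [NormedSpace ℝ E] [FiniteDimensional ℝ E] {q : E → ℝ} (hq : Continuous q)
    (hhom : ∀ (c : ℝ) x, q (c • x) = c ^ 2 * q x) {C : Set E} (hC : IsClosed C)
    (hCsmul : ∀ c : ℝ, 0 < c → ∀ x ∈ C, c • x ∈ C) (hpos : ∀ x ∈ C, x ≠ 0 → 0 < q x) :
    ∃ lam > 0, ∀ x ∈ C, lam * ‖x‖ ^ 2 ≤ q x := by
  have hq0 : q 0 = 0 := by simpa using hhom 0 0
  have hunit : ∀ x ∈ C, x ≠ 0 → ‖x‖⁻¹ • x ∈ C ∩ Metric.sphere 0 1 := fun x hx hx0 =>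
    ⟨hCsmul _ (by positivity) x hx, by simp [norm_smul, hx0]⟩
  have hscale : ∀ x ≠ (0 : E), q x = ‖x‖ ^ 2 * q (‖x‖⁻¹ • x) := fun x hx0 => by
    rw [hhom, ← mul_assoc, ← mul_pow, mul_inv_cancel₀ (norm_ne_zero_iff.mpr hx0), one_pow,
      one_mul]
  rcases (C ∩ Metric.sphere 0 1).eq_empty_or_nonempty with hempty | hne
  · refine ⟨1, one_pos, fun x hx => ?_⟩
    obtain rfl : x = 0 := by
      by_contra hx0
      simpa [hempty] using hunit x hx hx0
    simp [hq0]
  · obtain ⟨w, ⟨hwC, hw1⟩, hwmin⟩ :=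
      ((isCompact_sphere 0 1).inter_left hC).exists_isMinOn hne hq.continuousOn
    refine ⟨q w, hpos w hwC (ne_zero_of_mem_unit_sphere ⟨w, hw1⟩), fun x hx => ?_⟩
    rcases eq_or_ne x 0 with rfl | hx0
    · simp [hq0]
    · rw [hscale x hx0, mul_comm]
      gcongr
      exact hwmin (hunit x hx hx0)

section FeasibleCone

variable {ι : Type*}

def feasibleCone (μ : ι → ℝ) : Set (ι → ℝ) := {w | ∀ i, μ i = 0 → 0 ≤ w i}

variable {μ : ι → ℝ}

theorem sub_mem_feasibleCone {ν : ι → ℝ} (hν : ∀ i, 0 ≤ ν i) : ν - μ ∈ feasibleCone μ :=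
  fun i hi => by simpa [hi] using hν i

theorem smul_mem_feasibleCone {c : ℝ} (hc : 0 ≤ c) {w : ι → ℝ} (hw : w ∈ feasibleCone μ) :
    c • w ∈ feasibleCone μ :=
  fun i hi => mul_nonneg hc (hw i hi)

theorem isClosed_feasibleCone (μ : ι → ℝ) : IsClosed (feasibleCone μ) := by
  have : feasibleCone μ = ⋂ i ∈ {i | μ i = 0}, {w : ι → ℝ | 0 ≤ w i} := by
    ext w; simp [feasibleCone]
  rw [this]
  exact isClosed_biInter fun i _ => isClosed_le continuous_const (continuous_apply i)

theorem exists_pos_forall_nonneg_add_mul_of_mem_feasibleCone [Finite ι] (hμ : ∀ i, 0 ≤ μ i)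
    {w : ι → ℝ} (hw : w ∈ feasibleCone μ) : ∃ t > 0, ∀ i, 0 ≤ μ i + t * w i := by
  have hev : ∀ i, ∀ᶠ t in 𝓝[>] (0 : ℝ), 0 ≤ μ i + t * w i := by
    intro i
    rcases (hμ i).eq_or_lt with h | h
    · filter_upwards [self_mem_nhdsWithin] with t ht
      rw [← h, zero_add]
      exact mul_nonneg (le_of_lt ht) (hw i h.symm)
    · have hcont : Tendsto (fun t : ℝ => μ i + t * w i) (𝓝[>] 0) (𝓝 (μ i)) := by
        simpa using ((by fun_prop : Continuous fun t : ℝ => μ i + t * w i).tendsto 0).mono_left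
          nhdsWithin_le_nhds
      exact (hcont.eventually (eventually_gt_nhds h)).mono fun t ht => ht.le
  exact ((eventually_all.mpr hev).and self_mem_nhdsWithin).exists.imp fun t ht => ⟨ht.2, ht.1⟩

theorem Matrix.PosSemidef.dotProduct_mulVec_pos_of_mem_feasibleCone [Fintype ι]
    {H : Matrix ι ι ℝ} (hH : H.PosSemidef) (hμ : ∀ i, 0 ≤ μ i)
    (hker : ∀ v : ι → ℝ, H *ᵥ v = 0 → (∀ i, 0 ≤ μ i + v i) → v = 0)
    {w : ι → ℝ} (hw : w ∈ feasibleCone μ) (hw0 : w ≠ 0) : 0 < w ⬝ᵥ H *ᵥ w := by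
  refine (hH.dotProduct_mulVec_nonneg w).lt_of_ne fun h => hw0 ?_
  have hHw : H *ᵥ w = 0 := (hH.dotProduct_mulVec_zero_iff w).mp h.symm
  obtain ⟨t, ht, hnonneg⟩ := exists_pos_forall_nonneg_add_mul_of_mem_feasibleCone hμ hw
  have htw : t • w = 0 := hker (t • w) (by rw [mulVec_smul, hHw, smul_zero]) hnonneg
  exact (smul_eq_zero.mp htw).resolve_left ht.ne'

end FeasibleCone

theorem stmt_5_general {N : ℕ}
    (H : Matrix (Fin N) (Fin N) ℝ)
    (μ : Fin N → ℝ) (hμ : ∀ i, 0 ≤ μ i)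
    (hPSD : H.PosSemidef)
    (hker : ∀ v : Fin N → ℝ, H.mulVec v = 0 → (∀ i, 0 ≤ μ i + v i) → v = 0) :
    ∃ lam > 0, ∀ ν : Fin N → ℝ, (∀ i, 0 ≤ ν i) →
      lam * ∑ i, (ν i - μ i) ^ 2 ≤ (ν - μ) ⬝ᵥ H.mulVec (ν - μ) := by
  let q : EuclideanSpace ℝ (Fin N) → ℝ := fun x => x.ofLp ⬝ᵥ H *ᵥ x.ofLp
  obtain ⟨lam, hlam, hbound⟩ := exists_pos_mul_norm_sq_le_of_isClosed_cone (q := q)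
    (C := WithLp.ofLp ⁻¹' feasibleCone μ) (by fun_prop)
    (fun c x => by simp only [q, WithLp.ofLp_smul, mulVec_smul, dotProduct_smul,
      smul_dotProduct, smul_eq_mul]; ring)
    ((isClosed_feasibleCone μ).preimage (PiLp.continuous_ofLp 2 _))
    (fun c hc x hx => smul_mem_feasibleCone hc.le hx)
    (fun x hx hx0 => hPSD.dotProduct_mulVec_pos_of_mem_feasibleCone hμ hker hx
      (by simpa using hx0))
  refine ⟨lam, hlam, fun ν hν => ?_⟩
  simpa [EuclideanSpace.real_norm_sq_eq, q] using
    hbound (WithLp.toLp 2 (ν - μ)) (sub_mem_feasibleCone hν)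

/-- If the PSD Hessian `H` of a convex function at a constrained minimizer `μ` satisfies
`(μ + ker H) ∩ ℝ₊ᴺ = {μ}`, then the quadratic form of `H` is coercive in the directions
of the cone: `(ν-μ)ᵀ H (ν-μ) ≥ λ ‖ν-μ‖²` for all `ν ≥ 0`. -/
theorem stmt_5 {N : ℕ} (E : (Fin N → ℝ) → ℝ)
    (hconv : ConvexOn ℝ Set.univ E) (hE : ContDiff ℝ 2 E)
    (H : Matrix (Fin N) (Fin N) ℝ)
    (μ : Fin N → ℝ) (hμ : ∀ i, 0 ≤ μ i)
    (hHess : ∀ v w : Fin N → ℝ, iteratedFDeriv ℝ 2 E μ ![v, w] = v ⬝ᵥ H.mulVec w)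
    (hPSD : H.PosSemidef)
    (hmin : ∀ ν : Fin N → ℝ, (∀ i, 0 ≤ ν i) → E μ ≤ E ν)
    (hker : ∀ v : Fin N → ℝ, H.mulVec v = 0 → (∀ i, 0 ≤ μ i + v i) → v = 0) :
    ∃ lam > 0, ∀ ν : Fin N → ℝ, (∀ i, 0 ≤ ν i) →
      lam * ∑ i, (ν i - μ i) ^ 2 ≤ (ν - μ) ⬝ᵥ H.mulVec (ν - μ) :=
  stmt_5_general H μ hμ hPSD hker
end

section
/- Let E : ℝ^N → ℝ be convex and twice differentiable, and let μ* ∈ ℝ₊^N be a minimizer of E over ℝ₊^N such that (μ* + ker Hess E(μ*)) ∩ ℝ₊^N = {μ*}. Then μ* is the unique minimizer of E over ℝ₊^N. -/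
/-!
Since `ν` and `μ` both minimize the convex function `E` over the convex cone, `E` is constant on
the segment `[μ, ν]`. Along that segment the second derivative of `E` therefore vanishes, so
`v := ν - μ` is an isotropic vector of the Hessian `H`. Convexity makes `H` positive
semidefinite, and an isotropic vector of a positive semidefinite matrix lies in its kernel.
Hence `H v = 0` with `μ + v = ν ≥ 0`, and the kernel hypothesis forces `v = 0`.
-/

open Matrix Set Filter Topology

section LineDerivatives

variable {F G : Type*} [NormedAddCommGroup F] [NormedSpace ℝ F]
  [NormedAddCommGroup G] [NormedSpace ℝ G]

theorem Differentiable.hasDerivAt_comp_add_smul {f : F → G} (hf : Differentiable ℝ f)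
    (x v : F) (t : ℝ) :
    HasDerivAt (fun s : ℝ => f (x + s • v)) (fderiv ℝ f (x + t • v) v) t := by
  have hline : HasDerivAt (fun s : ℝ => x + s • v) v t := by
    simpa using ((hasDerivAt_id t).smul_const v).const_add x
  exact (hf (x + t • v)).hasFDerivAt.comp_hasDerivAt t hline

theorem ContDiff.hasDerivAt_fderiv_comp_add_smul {f : F → G} (hf : ContDiff ℝ 2 f)
    (x v : F) (t : ℝ) :
    HasDerivAt (fun s : ℝ => fderiv ℝ f (x + s • v) v)
      (fderiv ℝ (fderiv ℝ f) (x + t • v) v v) t := by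
  have hf' : Differentiable ℝ (fderiv ℝ f) :=
    (hf.fderiv_right (m := 1) le_rfl).differentiable one_ne_zero
  simpa using (hf'.hasDerivAt_comp_add_smul x v t).clm_apply (hasDerivAt_const t v)

theorem HasDerivAt.eq_zero_of_eventuallyEq_const_nhdsGE {f : ℝ → G} {f' c : G} {t : ℝ}
    (hf : HasDerivAt f f' t) (hc : f =ᶠ[𝓝[≥] t] fun _ => c) : f' = 0 :=
  (uniqueDiffWithinAt_Ici t).eq_deriv _ hf.hasDerivWithinAt <|
    (hasDerivWithinAt_const t _ c).congr_of_eventuallyEq hc (hc.eq_of_nhdsWithin self_mem_Ici)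

theorem ContDiff.fderiv_fderiv_apply_self_eq_zero {f : F → G} (hf : ContDiff ℝ 2 f) {x v : F}
    (hconst : ∀ t ∈ Icc (0 : ℝ) 1, f (x + t • v) = f x) :
    fderiv ℝ (fderiv ℝ f) x v v = 0 := by
  have hIco {t : ℝ} (ht : t ∈ Ico (0 : ℝ) 1) : Ico t 1 ∈ 𝓝[≥] t := Ico_mem_nhdsGE ht.2
  have hfirst : ∀ t ∈ Ico (0 : ℝ) 1, fderiv ℝ f (x + t • v) v = 0 := fun t ht =>
    ((hf.differentiable two_ne_zero).hasDerivAt_comp_add_smul x v t)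
      |>.eq_zero_of_eventuallyEq_const_nhdsGE (c := f x) <| mem_of_superset (hIco ht) fun s hs =>
        hconst s ⟨ht.1.trans hs.1, hs.2.le⟩
  simpa using (hf.hasDerivAt_fderiv_comp_add_smul x v 0).eq_zero_of_eventuallyEq_const_nhdsGE
    (c := 0) <| mem_of_superset (hIco ⟨le_rfl, zero_lt_one⟩) fun s hs =>
      hfirst s ⟨hs.1, hs.2⟩

theorem ConvexOn.fderiv_fderiv_apply_self_nonneg {f : F → ℝ} (hconv : ConvexOn ℝ univ f)
    (hf : ContDiff ℝ 2 f) (x v : F) : 0 ≤ fderiv ℝ (fderiv ℝ f) x v v := by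
  set g : ℝ → ℝ := fun s => f (x + s • v)
  have hg : ∀ t, HasDerivAt g (fderiv ℝ f (x + t • v) v) t :=
    (hf.differentiable two_ne_zero).hasDerivAt_comp_add_smul x v
  have hgconv : ConvexOn ℝ univ g := by
    have hline : g = f ∘ AffineMap.lineMap x (x + v) := by
      ext s; simp [g, AffineMap.lineMap_apply, add_comm]
    simpa [hline] using hconv.comp_affineMap (AffineMap.lineMap x (x + v))
  have hmono : Monotone (deriv g) := by
    simpa using hgconv.monotoneOn_deriv fun t _ => (hg t).differentiableAt
  have hderiv : deriv g = fun t => fderiv ℝ f (x + t • v) v := funext fun t => (hg t).deriv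
  simpa [hderiv, (hf.hasDerivAt_fderiv_comp_add_smul x v 0).deriv] using
    hmono.deriv_nonneg (x := 0)

end LineDerivatives

theorem ConvexOn.eq_of_isMinOn_of_isMinOn {F : Type*} [AddCommGroup F] [Module ℝ F]
    {s : Set F} {f : F → ℝ} (hf : ConvexOn ℝ s f) {x y : F} (hx : x ∈ s) (hy : y ∈ s)
    (hxmin : IsMinOn f s x) (hymin : IsMinOn f s y) {t : ℝ} (ht : t ∈ Icc (0 : ℝ) 1) :
    f (x + t • (y - x)) = f x := by
  have hcomb : x + t • (y - x) = (1 - t) • x + t • y := by module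
  have hxy : f y = f x := le_antisymm (hymin hx) (hxmin hy)
  refine le_antisymm ?_ (hxmin (hf.1.add_smul_sub_mem hx hy ht))
  calc f (x + t • (y - x)) ≤ (1 - t) • f x + t • f y := by
        rw [hcomb]; exact hf.2 hx hy (sub_nonneg.2 ht.2) ht.1 (by ring)
    _ = f x := by rw [hxy, smul_eq_mul, smul_eq_mul]; ring

theorem Matrix.posSemidef_of_dotProduct_mulVec_symm {n : Type*} [Fintype n] [DecidableEq n]
    {H : Matrix n n ℝ} (hsymm : ∀ v w, v ⬝ᵥ H *ᵥ w = w ⬝ᵥ H *ᵥ v)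
    (hnonneg : ∀ v, 0 ≤ v ⬝ᵥ H *ᵥ v) : H.PosSemidef :=
  .of_dotProduct_mulVec_nonneg
    (IsHermitian.ext fun i j => by
      simpa [mulVec_single_one] using hsymm (Pi.single j 1) (Pi.single i 1))
    (by simpa using hnonneg)

/-- Well-posedness: if `(μ + ker Hess E(μ)) ∩ ℝ₊ᴺ = {μ}` at a minimizer `μ` of the convex
twice differentiable `E` over the nonnegative cone, then `μ` is the unique minimizer. -/
theorem stmt_6 {N : ℕ} (E : (Fin N → ℝ) → ℝ)
    (hconv : ConvexOn ℝ Set.univ E) (hE : ContDiff ℝ 2 E)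
    (H : Matrix (Fin N) (Fin N) ℝ)
    (μ : Fin N → ℝ) (hμ : ∀ i, 0 ≤ μ i)
    (hHess : ∀ v w : Fin N → ℝ, iteratedFDeriv ℝ 2 E μ ![v, w] = v ⬝ᵥ H.mulVec w)
    (hmin : ∀ ν : Fin N → ℝ, (∀ i, 0 ≤ ν i) → E μ ≤ E ν)
    (hker : ∀ v : Fin N → ℝ, H.mulVec v = 0 → (∀ i, 0 ≤ μ i + v i) → v = 0) :
    ∀ ν : Fin N → ℝ, (∀ i, 0 ≤ ν i) →
      (∀ ρ : Fin N → ℝ, (∀ i, 0 ≤ ρ i) → E ν ≤ E ρ) → ν = μ := by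
  intro ν hν hνmin
  have hB (a b : Fin N → ℝ) : fderiv ℝ (fderiv ℝ E) μ a b = a ⬝ᵥ H *ᵥ b := by
    simpa [iteratedFDeriv_two_apply] using hHess a b
  have hPSD : H.PosSemidef := posSemidef_of_dotProduct_mulVec_symm
    (fun a b => by rw [← hB, ← hB, (hE.contDiffAt.isSymmSndFDerivAt (by simp)).eq])
    (fun a => hB a a ▸ hconv.fderiv_fderiv_apply_self_nonneg hE μ a)
  have hflat : ∀ t ∈ Icc (0 : ℝ) 1, E (μ + t • (ν - μ)) = E μ := fun t =>
    (hconv.subset (subset_univ _) (convex_Ici 0)).eq_of_isMinOn_of_isMinOn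
      (x := μ) (y := ν) hμ hν (fun ρ hρ => hmin ρ hρ) (fun ρ hρ => hνmin ρ hρ)
  have hisotropic : (ν - μ) ⬝ᵥ H *ᵥ (ν - μ) = 0 :=
    hB _ _ ▸ hE.fderiv_fderiv_apply_self_eq_zero hflat
  have hkernel : H *ᵥ (ν - μ) = 0 :=
    (hPSD.dotProduct_mulVec_zero_iff _).1 (by simpa using hisotropic)
  exact sub_eq_zero.1 (hker _ hkernel (by simpa using hν))
end

section
/- Let F : ℝ^N → ℝ be C² with Hess F ⪰ λ·I on a convex set U (λ ∈ ℝ, possibly negative), let τ > 0 satisfy λτ + 2 > 0, and let the implicit Euler sequence σ^{ℓ+1} satisfy ∇F(σ^{ℓ+1}) = −(σ^{ℓ+1} − σ^ℓ)/τ with segment [σ^ℓ, σ^{ℓ+1}] ⊂ U. Then F(σ^ℓ) − F(σ^{ℓ+1}) ≥ ((λτ + 2)/(2τ)) ‖σ^{ℓ+1} − σ^ℓ‖². -/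
/-
Restrict `F` to the segment from `σ (ℓ + 1)` to `σ ℓ`. Along it, the Hessian bound gives the
second-order Taylor lower bound `F(σˡ) ≥ F(σˡ⁺¹) + ⟪∇F(σˡ⁺¹), σˡ − σˡ⁺¹⟫ + (λ/2)‖σˡ − σˡ⁺¹‖²`,
and the implicit Euler equation turns the linear term into `‖σˡ − σˡ⁺¹‖² / τ`.
-/

open Set InnerProductSpace AffineMap

theorem le_image_one_of_le_second_deriv {g g' g'' : ℝ → ℝ} {m : ℝ}
    (hg : ∀ t, HasDerivAt g (g' t) t) (hg' : ∀ t, HasDerivAt g' (g'' t) t)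
    (hm : ∀ t ∈ Icc (0 : ℝ) 1, m ≤ g'' t) :
    g 0 + g' 0 + m / 2 ≤ g 1 := by
  have hslope_deriv : ∀ t, HasDerivAt (fun t => g' t - m * t) (g'' t - m) t := fun t =>
    ((hg' t).fun_sub ((hasDerivAt_id' t).const_mul m)).congr_deriv (by rw [mul_one])
  have hslope : MonotoneOn (fun t => g' t - m * t) (Icc 0 1) :=
    monotoneOn_of_hasDerivWithinAt_nonneg (convex_Icc 0 1)
      (fun t _ => (hslope_deriv t).continuousAt.continuousWithinAt)
      (fun t _ => (hslope_deriv t).hasDerivWithinAt)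
      fun t ht => sub_nonneg.2 (hm t (interior_subset ht))
  -- the derivative is written as an increment of `fun t => g' t - m * t`, to which `hslope` applies
  have hgap_deriv : ∀ t, HasDerivAt (fun t => g t - g' 0 * t - m / 2 * t ^ 2)
      (g' t - m * t - (g' 0 - m * 0)) t := fun t =>
    (((hg t).fun_sub ((hasDerivAt_id' t).const_mul (g' 0))).fun_sub
      ((hasDerivAt_pow 2 t).const_mul (m / 2))).congr_deriv (by push_cast; ring)
  have hgap : MonotoneOn (fun t => g t - g' 0 * t - m / 2 * t ^ 2) (Icc 0 1) :=
    monotoneOn_of_hasDerivWithinAt_nonneg (convex_Icc 0 1)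
      (fun t _ => (hgap_deriv t).continuousAt.continuousWithinAt)
      (fun t _ => (hgap_deriv t).hasDerivWithinAt)
      fun t ht => sub_nonneg.2 <|
        hslope (left_mem_Icc.2 zero_le_one) (interior_subset ht) (interior_subset ht).1
  have := hgap (left_mem_Icc.2 zero_le_one) (right_mem_Icc.2 zero_le_one) zero_le_one
  norm_num at this
  linarith

variable {E : Type*} [NormedAddCommGroup E] [NormedSpace ℝ E]

theorem hasDerivAt_fderiv_lineMap_apply {F : E → ℝ} (hF : ContDiff ℝ 2 F) (x y : E) (t : ℝ) :
    HasDerivAt (fun s => fderiv ℝ F (lineMap y x s) (x - y))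
      (iteratedFDeriv ℝ 2 F (lineMap y x t) ![x - y, x - y]) t := by
  have hD : Differentiable ℝ (fderiv ℝ F) :=
    (hF.fderiv_right (m := 1) (by norm_num)).differentiable one_ne_zero
  rw [iteratedFDeriv_two_apply]
  simpa using ((hD _).hasFDerivAt.comp_hasDerivAt t hasDerivAt_lineMap).clm_apply
    (hasDerivAt_const t (x - y))

theorem le_of_le_iteratedFDeriv_two_on_segment {F : E → ℝ} (hF : ContDiff ℝ 2 F) {x y : E}
    {m : ℝ} (hm : ∀ ξ ∈ segment ℝ y x, m ≤ iteratedFDeriv ℝ 2 F ξ ![x - y, x - y]) :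
    F y + fderiv ℝ F y (x - y) + m / 2 ≤ F x := by
  have hF' : ∀ t : ℝ, HasDerivAt (fun s => F (lineMap y x s))
      (fderiv ℝ F (lineMap y x t) (x - y)) t := fun t =>
    ((hF.differentiable (by norm_num)) _).hasFDerivAt.comp_hasDerivAt t hasDerivAt_lineMap
  simpa using le_image_one_of_le_second_deriv hF' (hasDerivAt_fderiv_lineMap_apply hF x y)
    fun t ht => hm _ (segment_eq_image_lineMap ℝ y x ▸ mem_image_of_mem _ ht)

theorem stmt_16_general {N : ℕ} (F : EuclideanSpace ℝ (Fin N) → ℝ) (hF : ContDiff ℝ 2 F)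
    (U : Set (EuclideanSpace ℝ (Fin N))) (lam : ℝ)
    (hHess : ∀ ξ ∈ U, ∀ v : EuclideanSpace ℝ (Fin N),
      lam * ‖v‖ ^ 2 ≤ iteratedFDeriv ℝ 2 F ξ ![v, v])
    (τ : ℝ) (hτ : 0 < τ)
    (σ : ℕ → EuclideanSpace ℝ (Fin N))
    (hstep : ∀ ℓ, gradient F (σ (ℓ + 1)) = (-(1 / τ)) • (σ (ℓ + 1) - σ ℓ))
    (hseg : ∀ ℓ, segment ℝ (σ ℓ) (σ (ℓ + 1)) ⊆ U) :
    ∀ ℓ, ((lam * τ + 2) / (2 * τ)) * ‖σ (ℓ + 1) - σ ℓ‖ ^ 2 ≤ F (σ ℓ) - F (σ (ℓ + 1)) := by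
  intro ℓ
  set x := σ ℓ
  set y := σ (ℓ + 1)
  have htaylor := le_of_le_iteratedFDeriv_two_on_segment hF
    fun ξ hξ => hHess ξ (hseg ℓ (segment_symm ℝ x y ▸ hξ)) (x - y)
  have hlinear : fderiv ℝ F y (x - y) = ‖x - y‖ ^ 2 / τ := by
    rw [← inner_gradient_left, hstep ℓ, real_inner_smul_left, ← neg_sub x, inner_neg_left,
      real_inner_self_eq_norm_sq]
    ring
  calc (lam * τ + 2) / (2 * τ) * ‖y - x‖ ^ 2 = ‖x - y‖ ^ 2 / τ + lam * ‖x - y‖ ^ 2 / 2 := by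
        rw [norm_sub_rev]; field_simp; ring
    _ ≤ F x - F y := by linarith

/-- Descent estimate for one backward Euler step: if `Hess F ⪰ λ I` on a convex set `U`
containing the segment between iterates, `τ > 0` and `λτ + 2 > 0`, then
`F(σˡ) − F(σˡ⁺¹) ≥ ((λτ + 2)/(2τ)) ‖σˡ⁺¹ − σˡ‖²`. -/
theorem stmt_16 {N : ℕ} (F : EuclideanSpace ℝ (Fin N) → ℝ) (hF : ContDiff ℝ 2 F)
    (U : Set (EuclideanSpace ℝ (Fin N))) (hU : Convex ℝ U) (lam : ℝ)
    (hHess : ∀ ξ ∈ U, ∀ v : EuclideanSpace ℝ (Fin N),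
      lam * ‖v‖ ^ 2 ≤ iteratedFDeriv ℝ 2 F ξ ![v, v])
    (τ : ℝ) (hτ : 0 < τ) (hlt : 0 < lam * τ + 2)
    (σ : ℕ → EuclideanSpace ℝ (Fin N))
    (hstep : ∀ ℓ, gradient F (σ (ℓ + 1)) = (-(1 / τ)) • (σ (ℓ + 1) - σ ℓ))
    (hseg : ∀ ℓ, segment ℝ (σ ℓ) (σ (ℓ + 1)) ⊆ U) :
    ∀ ℓ, ((lam * τ + 2) / (2 * τ)) * ‖σ (ℓ + 1) - σ ℓ‖ ^ 2 ≤ F (σ ℓ) - F (σ (ℓ + 1)) :=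
  stmt_16_general F hF U lam hHess τ hτ σ hstep hseg
end
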